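/- Let w be a recurrent balanced infinite binary word. Then w is either Sturmian or periodic; and if w is periodic, then w contains a factor having exactly one semi-abelian return. -/

import Mathlib

/-- The factor of length `n` of the infinite word `w` starting at position `i`. -/
def wordAt {α : Type*} (w : ℕ → α) (i n : ℕ) : List α :=
  (List.range n).map (fun k => w (i + k))

/-- `u` is a factor of the infinite word `w`. -/
def IsFactorW {α : Type*} (w : ℕ → α) (u : List α) : Prop :=
  ∃ i, u = wordAt w i u.length

/-- `w` is recurrent: every factor occurs infinitely often. -/
def RecurrentW {α : Type*} (w : ℕ → α) : Prop :=
  ∀ u, IsFactorW w u → ∀ N, ∃ i, N ≤ i ∧ u = wordAt w i u.length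

/-- `w` is (purely) periodic. -/
def PeriodicW {α : Type*} (w : ℕ → α) : Prop :=
  ∃ T, 0 < T ∧ ∀ n, w (n + T) = w n

/-- `w` is ultimately periodic. -/
def UltPeriodicW {α : Type*} (w : ℕ → α) : Prop :=
  ∃ T, 0 < T ∧ ∃ n₀, ∀ n, n₀ ≤ n → w (n + T) = w n

/-- Two finite words are abelian equivalent: same number of occurrences of each letter. -/
def AbEquiv {α : Type*} [DecidableEq α] (u v : List α) : Prop :=
  ∀ a : α, u.count a = v.count a

/-- Positions of occurrences of words abelian equivalent to `u` in `w`. -/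
def abOcc {α : Type*} [DecidableEq α] (w : ℕ → α) (u : List α) : Set ℕ :=
  {i | AbEquiv (wordAt w i u.length) u}

/-- The semi-abelian returns to (the abelian class of) `u` in `w`: words extending from one
occurrence of the abelian class of `u` to the next one. -/
def semiAbReturns {α : Type*} [DecidableEq α] (w : ℕ → α) (u : List α) : Set (List α) :=
  {r | ∃ i j, i ∈ abOcc w u ∧ j ∈ abOcc w u ∧ i < j ∧
      (∀ k, i < k → k < j → k ∉ abOcc w u) ∧ r = wordAt w i (j - i)}

/-- Positions of (exact) occurrences of `u` in `w`. -/
def occW {α : Type*} [DecidableEq α] (w : ℕ → α) (u : List α) : Set ℕ :=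
  {i | u = wordAt w i u.length}

/-- The ordinary return words of `u` in `w`. -/
def returnWords {α : Type*} [DecidableEq α] (w : ℕ → α) (u : List α) : Set (List α) :=
  {r | ∃ i j, i ∈ occW w u ∧ j ∈ occW w u ∧ i < j ∧
      (∀ k, i < k → k < j → k ∉ occW w u) ∧ r = wordAt w i (j - i)}

/-- `u` has exactly `k` semi-abelian returns in `w`. -/
def ExactlyKSemiAbReturns {α : Type*} [DecidableEq α] (w : ℕ → α) (u : List α) (k : ℕ) : Prop :=
  ∃ f : Fin k → List α, Function.Injective f ∧ semiAbReturns w u = Set.range f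

/-- `u` has exactly `k` abelian returns in `w`: there are `k` pairwise non-abelian-equivalent
representatives so that every semi-abelian return is abelian equivalent to exactly one of them,
and each representative is realized. -/
def ExactlyKAbReturns {α : Type*} [DecidableEq α] (w : ℕ → α) (u : List α) (k : ℕ) : Prop :=
  ∃ f : Fin k → List α,
    (∀ i j, AbEquiv (f i) (f j) → i = j) ∧
    (∀ r ∈ semiAbReturns w u, ∃ i, AbEquiv r (f i)) ∧
    (∀ i, ∃ r ∈ semiAbReturns w u, AbEquiv r (f i))

/-- `u` has at most `k` abelian returns in `w`. -/
def AtMostKAbReturns {α : Type*} [DecidableEq α] (w : ℕ → α) (u : List α) (k : ℕ) : Prop :=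
  ∃ f : Fin k → List α, ∀ r ∈ semiAbReturns w u, ∃ i, AbEquiv r (f i)

/-- `u` has at least `k` abelian returns in `w`. -/
def AtLeastKAbReturns {α : Type*} [DecidableEq α] (w : ℕ → α) (u : List α) (k : ℕ) : Prop :=
  ∃ f : Fin k → List α,
    (∀ i j, AbEquiv (f i) (f j) → i = j) ∧
    (∀ i, ∃ r ∈ semiAbReturns w u, AbEquiv r (f i))

/-- `u` has at least two semi-abelian returns in `w`. -/
def AtLeastTwoSemiAbReturns {α : Type*} [DecidableEq α] (w : ℕ → α) (u : List α) : Prop :=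
  ∃ r₁ r₂, r₁ ∈ semiAbReturns w u ∧ r₂ ∈ semiAbReturns w u ∧ r₁ ≠ r₂

/-- The factor complexity of `w`. -/
noncomputable def complexityW {α : Type*} (w : ℕ → α) (n : ℕ) : ℕ :=
  {u : List α | u.length = n ∧ IsFactorW w u}.ncard

/-- A Sturmian word: aperiodic binary word with factor complexity `n + 1`. -/
def SturmianW (w : ℕ → Bool) : Prop :=
  ¬ UltPeriodicW w ∧ ∀ n, complexityW w n = n + 1

/-- Right special factor of a binary word. -/
def RightSpecial (w : ℕ → Bool) (B : List Bool) : Prop :=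
  IsFactorW w (B ++ [false]) ∧ IsFactorW w (B ++ [true])

/-- Left special factor of a binary word. -/
def LeftSpecial (w : ℕ → Bool) (B : List Bool) : Prop :=
  IsFactorW w (false :: B) ∧ IsFactorW w (true :: B)

/-- Bispecial factor of a binary word. -/
def Bispecial (w : ℕ → Bool) (B : List Bool) : Prop :=
  RightSpecial w B ∧ LeftSpecial w B

/-- `w` is `c`-balanced. -/
def CBalanced {α : Type*} [DecidableEq α] (w : ℕ → α) (c : ℕ) : Prop :=
  ∀ u v : List α, IsFactorW w u → IsFactorW w v → u.length = v.length →
    ∀ a : α, |((u.count a : ℤ) - (v.count a : ℤ))| ≤ (c : ℤ)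

/-!
If `w` is ultimately periodic, recurrence makes it purely periodic. Otherwise every length has
a right special factor, and balance makes it unique, so the factor complexity grows by exactly
one at each step.

For a periodic balanced word with minimal period `T` and `p` ones per period, the windows of
length `n` take only two weights, and exactly `n * p % T` residues mod `T` carry the heavier
one. Minimality of `T` forces `gcd(p, T) = 1`, so for `n * p ≡ 1 (mod T)` the heavy window
occurs in exactly one residue class; its abelian occurrences are spaced by `T`, and the only
semi-abelian return is one full period.
-/

open Function Finset

section Words
variable {α : Type*}

@[simp] lemma length_wordAt (w : ℕ → α) (i n : ℕ) : (wordAt w i n).length = n := by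
  simp [wordAt]

lemma wordAt_add (w : ℕ → α) (i m k : ℕ) :
    wordAt w i (m + k) = wordAt w i m ++ wordAt w (i + m) k := by
  simp [wordAt, List.range_add, add_assoc]

lemma wordAt_succ (w : ℕ → α) (i n : ℕ) :
    wordAt w i (n + 1) = wordAt w i n ++ [w (i + n)] := by
  simp [wordAt, List.range_succ]

lemma wordAt_succ' (w : ℕ → α) (i n : ℕ) :
    wordAt w i (n + 1) = w i :: wordAt w (i + 1) n := by
  rw [add_comm n 1, wordAt_add]
  simp [wordAt]

lemma wordAt_eq_wordAt_iff {w : ℕ → α} {i j n : ℕ} :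
    wordAt w i n = wordAt w j n ↔ ∀ k < n, w (i + k) = w (j + k) := by
  simp [wordAt, List.map_inj_left]

lemma isFactorW_wordAt (w : ℕ → α) (i n : ℕ) : IsFactorW w (wordAt w i n) :=
  ⟨i, by rw [length_wordAt]⟩

lemma IsFactorW.of_append {w : ℕ → α} {u v : List α} (h : IsFactorW w (u ++ v)) :
    IsFactorW w u ∧ IsFactorW w v := by
  obtain ⟨i, hi⟩ := h
  rw [List.length_append, wordAt_add] at hi
  obtain ⟨hu, hv⟩ := List.append_inj hi (length_wordAt ..).symm
  exact ⟨⟨i, hu⟩, ⟨i + u.length, hv⟩⟩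

lemma Function.Periodic.wordAt {w : ℕ → α} {T : ℕ} (h : Periodic w T) (n : ℕ) :
    Periodic (fun i => _root_.wordAt w i n) T := fun i => by
  simp only [_root_.wordAt, add_right_comm i T, show ∀ x, w (x + T) = w x from h]

lemma PeriodicW.ultPeriodicW {w : ℕ → α} (h : PeriodicW w) : UltPeriodicW w :=
  let ⟨T, hT, hw⟩ := h
  ⟨T, hT, 0, fun n _ => hw n⟩

/-- An occurrence of the prefix of length `n + T + 1` beyond the preperiod carries the
periodicity back to position `n`. -/
lemma RecurrentW.periodicW {w : ℕ → α} (hrec : RecurrentW w) (hup : UltPeriodicW w) :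
    PeriodicW w := by
  obtain ⟨T, hT, n₀, hper⟩ := hup
  refine ⟨T, hT, fun n => ?_⟩
  obtain ⟨i, hi, hocc⟩ := hrec (wordAt w 0 (n + T + 1)) (isFactorW_wordAt w 0 _) n₀
  rw [length_wordAt, wordAt_eq_wordAt_iff] at hocc
  calc w (n + T) = w (i + n + T) := by simpa [add_assoc] using hocc (n + T) (by omega)
    _ = w (i + n) := hper _ (by omega)
    _ = w n := by simpa using (hocc n (by omega)).symm

/-- If the letter following a factor of length `n` is determined by that factor, two equal
windows of length `n` (which exist by pigeonhole) force the word to repeat from then on. -/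
lemma ultPeriodicW_of_determined [Finite α] {w : ℕ → α} {n : ℕ}
    (det : ∀ i j, wordAt w i n = wordAt w j n → w (i + n) = w (j + n)) : UltPeriodicW w := by
  obtain ⟨i, j, hij, hw⟩ := Set.Finite.exists_lt_map_eq_of_forall_mem
    (f := fun i => wordAt w i n) (fun i => length_wordAt w i n) (List.finite_length_eq α n)
  have hshift : ∀ k, wordAt w (i + k) (n + 1) = wordAt w (j + k) (n + 1) := by
    intro k
    induction k with
    | zero => rw [wordAt_succ, wordAt_succ, add_zero, add_zero, hw, det _ _ hw]
    | succ k ih =>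
      have htail : wordAt w (i + k + 1) n = wordAt w (j + k + 1) n := by
        rw [wordAt_succ', wordAt_succ', List.cons.injEq] at ih
        exact ih.2
      rw [wordAt_succ, wordAt_succ, ← add_assoc, ← add_assoc, htail, det _ _ htail]
  refine ⟨j - i, by omega, i, fun m hm => ?_⟩
  have := congrArg List.head? (hshift (m - i))
  simp only [wordAt_succ', List.head?_cons, Option.some.injEq] at this
  rw [show m + (j - i) = j + (m - i) by omega, ← this]
  congr 1
  omega

end Words

section Complexity
variable {w : ℕ → Bool}

lemma complexityW_zero (w : ℕ → Bool) : complexityW w 0 = 1 := by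
  rw [complexityW, Set.ncard_eq_one]
  exact ⟨[], Set.ext fun u => by simpa using fun hu => ⟨0, by simp [hu, wordAt]⟩⟩

/-- Each factor of length `n` extends to the right by at least one letter, and by two
letters exactly when it is right special. -/
lemma complexityW_succ (w : ℕ → Bool) (n : ℕ) :
    complexityW w (n + 1) = complexityW w n + {B | B.length = n ∧ RightSpecial w B}.ncard := by
  set E : Bool → Set (List Bool) := fun b => {B | B.length = n ∧ IsFactorW w (B ++ [b])}
  have hfin : ∀ b, (E b).Finite := fun b =>
    (List.finite_length_eq Bool n).subset fun B hB => hB.1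
  have hsucc : {u : List Bool | u.length = n + 1 ∧ IsFactorW w u} =
      (· ++ [false]) '' E false ∪ (· ++ [true]) '' E true := by
    ext u
    constructor
    · rintro ⟨hlen, hf⟩
      obtain rfl | ⟨B, b, rfl⟩ := u.eq_nil_or_concat'
      · simp at hlen
      · cases b <;> simp_all [E]
    · rintro (⟨B, ⟨hB, hf⟩, rfl⟩ | ⟨B, ⟨hB, hf⟩, rfl⟩) <;> simp [hB, hf]
  have hunion : E false ∪ E true = {B | B.length = n ∧ IsFactorW w B} := by
    ext B
    constructor
    · rintro (⟨hl, hf⟩ | ⟨hl, hf⟩) <;> exact ⟨hl, hf.of_append.1⟩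
    · rintro ⟨rfl, i, hi⟩
      have hext : IsFactorW w (B ++ [w (i + B.length)]) := by
        rw [hi, length_wordAt, ← wordAt_succ]
        exact isFactorW_wordAt w i _
      cases h : w (i + B.length) <;> rw [h] at hext
      exacts [Or.inl ⟨rfl, hext⟩, Or.inr ⟨rfl, hext⟩]
  have hinter : E false ∩ E true = {B | B.length = n ∧ RightSpecial w B} := by
    ext B
    simp only [E, RightSpecial, Set.mem_inter_iff, Set.mem_ofPred_eq]
    tauto
  have hdisj : Disjoint ((· ++ [false]) '' E false) ((· ++ [true]) '' E true) := by
    rw [Set.disjoint_left]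
    rintro _ ⟨B, -, rfl⟩ ⟨C, -, h⟩
    simpa using congrArg List.getLast? h
  rw [complexityW, complexityW, hsucc, Set.ncard_union_eq hdisj ((hfin _).image _)
    ((hfin _).image _), Set.ncard_image_of_injective _ (List.append_left_injective _),
    Set.ncard_image_of_injective _ (List.append_left_injective _), ← hunion, ← hinter,
    Set.ncard_union_add_ncard_inter _ _ (hfin _) (hfin _)]

lemma RightSpecial.of_cons {a : Bool} {B : List Bool} (h : RightSpecial w (a :: B)) :
    RightSpecial w B :=
  ⟨(IsFactorW.of_append (u := [a]) h.1).2, (IsFactorW.of_append (u := [a]) h.2).2⟩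

/-- Two right special factors of equal length have right special tails, equal by induction;
if their first letters differed, `0B0` and `1B1` would both be factors. -/
lemma CBalanced.rightSpecial_unique (hbal : CBalanced w 1) {B C : List Bool}
    (hlen : B.length = C.length) (hB : RightSpecial w B) (hC : RightSpecial w C) : B = C := by
  induction B generalizing C with
  | nil => exact (List.length_eq_zero_iff.mp hlen.symm).symm
  | cons a B ih =>
    obtain _ | ⟨c, C⟩ := C
    · simp at hlen
    obtain rfl : B = C := ih (by simpa using hlen) hB.of_cons hC.of_cons
    have hunbal : ¬ (IsFactorW w (false :: B ++ [false]) ∧ IsFactorW w (true :: B ++ [true])) :=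
      fun ⟨h₀, h₁⟩ => by
        have := abs_le.mp (hbal _ _ h₀ h₁ (by simp) true)
        simp [List.count_append] at this
    cases a <;> cases c
    · rfl
    · exact absurd ⟨hB.1, hC.2⟩ hunbal
    · exact absurd ⟨hC.1, hB.2⟩ hunbal
    · rfl

lemma exists_rightSpecial_of_not_ultPeriodicW (hup : ¬ UltPeriodicW w) (n : ℕ) :
    ∃ B, B.length = n ∧ RightSpecial w B := by
  by_contra hno
  refine hup (ultPeriodicW_of_determined (n := n) fun i j hij => ?_)
  by_contra hne
  have hi : IsFactorW w (wordAt w i n ++ [w (i + n)]) := by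
    rw [← wordAt_succ]; exact isFactorW_wordAt w i _
  have hj : IsFactorW w (wordAt w i n ++ [w (j + n)]) := by
    rw [hij, ← wordAt_succ]; exact isFactorW_wordAt w j _
  refine hno ⟨wordAt w i n, length_wordAt w i n, ?_⟩
  cases h₁ : w (i + n) <;> cases h₂ : w (j + n) <;> simp_all [RightSpecial]

lemma complexityW_eq_of_not_ultPeriodicW (hbal : CBalanced w 1) (hup : ¬ UltPeriodicW w)
    (n : ℕ) : complexityW w n = n + 1 := by
  induction n with
  | zero => exact complexityW_zero w
  | succ n ih =>
    obtain ⟨B, hlen, hB⟩ := exists_rightSpecial_of_not_ultPeriodicW hup n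
    have hRS : {B | B.length = n ∧ RightSpecial w B} = {B} :=
      Set.eq_singleton_iff_unique_mem.mpr ⟨⟨hlen, hB⟩, fun C ⟨hC, hCB⟩ =>
        hbal.rightSpecial_unique (hC.trans hlen.symm) hCB hB⟩
    rw [complexityW_succ, ih, hRS, Set.ncard_singleton]

end Complexity

section Weight
variable {w : ℕ → Bool} {T : ℕ}


def weightAt (w : ℕ → Bool) (i n : ℕ) : ℕ := (wordAt w i n).count true

lemma weightAt_succ (w : ℕ → Bool) (i n : ℕ) :
    weightAt w i (n + 1) = weightAt w i n + (w (i + n)).toNat := by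
  cases h : w (i + n) <;> simp [weightAt, wordAt_succ, List.count_append, h]

lemma weightAt_succ' (w : ℕ → Bool) (i n : ℕ) :
    weightAt w i (n + 1) = (w i).toNat + weightAt w (i + 1) n := by
  cases h : w i <;> simp [weightAt, wordAt_succ', h, add_comm]

lemma weightAt_eq_sum (w : ℕ → Bool) (i n : ℕ) :
    weightAt w i n = ∑ k ∈ range n, (w (i + k)).toNat := by
  induction n with
  | zero => simp [weightAt, wordAt]
  | succ n ih => rw [weightAt_succ, ih, sum_range_succ]

lemma abEquiv_wordAt_iff {i j n : ℕ} :
    AbEquiv (wordAt w i n) (wordAt w j n) ↔ weightAt w i n = weightAt w j n := by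
  refine ⟨fun h => h true, fun h a => ?_⟩
  have hlen (l : List Bool) : l.count false + l.count true = l.length := by
    induction l with
    | nil => rfl
    | cons b l ih => cases b <;> simp <;> omega
  cases a
  · have hi := hlen (wordAt w i n)
    have hj := hlen (wordAt w j n)
    simp only [length_wordAt] at hi hj
    unfold weightAt at h
    omega
  · exact h

lemma CBalanced.weightAt_le (hbal : CBalanced w 1) (i j n : ℕ) :
    weightAt w i n ≤ weightAt w j n + 1 := by
  have := abs_le.mp <| hbal _ _ (isFactorW_wordAt w i n) (isFactorW_wordAt w j n)
    (by simp) true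
  unfold weightAt
  omega

lemma Function.Periodic.weightAt (h : Periodic w T) (n : ℕ) :
    Periodic (fun i => _root_.weightAt w i n) T :=
  (h.wordAt n).comp (List.count true)

lemma Function.Periodic.weightAt_period (h : Periodic w T) (i : ℕ) :
    _root_.weightAt w i T = _root_.weightAt w 0 T := by
  induction i with
  | zero => rfl
  | succ i ih =>
    have h₁ := weightAt_succ w i T
    rw [weightAt_succ', h i] at h₁
    omega

/-- Double counting: every position of a period lies in exactly `n` of the windows of length
`n` starting in that period. -/
lemma Function.Periodic.sum_weightAt (h : Periodic w T) (n : ℕ) :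
    ∑ i ∈ range T, _root_.weightAt w i n = n * _root_.weightAt w 0 T := by
  calc ∑ i ∈ range T, _root_.weightAt w i n
      = ∑ k ∈ range n, ∑ i ∈ range T, (w (k + i)).toNat := by
        simp only [weightAt_eq_sum]
        rw [sum_comm]
        exact sum_congr rfl fun k _ => sum_congr rfl fun i _ => by rw [add_comm]
    _ = ∑ k ∈ range n, _root_.weightAt w 0 T := by
        simp_rw [← weightAt_eq_sum, h.weightAt_period]
    _ = n * _root_.weightAt w 0 T := by simp

lemma periodic_of_weightAt_eq {n : ℕ} (hconst : ∀ i, weightAt w i n = weightAt w 0 n) :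
    Periodic w n := fun i => by
  have h₁ := weightAt_succ w i n
  rw [weightAt_succ', hconst i, hconst (i + 1)] at h₁
  have h₂ : (w (i + n)).toNat = (w i).toNat := by omega
  cases h₃ : w (i + n) <;> cases h₄ : w i <;> simp_all

end Weight

section PeriodicCase
variable {w : ℕ → Bool} {T : ℕ}

/-- Summing over a period gives `T * q + #heavy = n * weightAt w 0 T`, and a window of minimal
weight is not heavy. -/
lemma CBalanced.card_heavy_windows (hbal : CBalanced w 1) (hw : Periodic w T) (hT : 0 < T)
    (n : ℕ) : ∃ q, (∀ i, weightAt w i n = q ∨ weightAt w i n = q + 1) ∧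
      #{i ∈ range T | weightAt w i n = q + 1} = n * weightAt w 0 T % T := by
  obtain ⟨i₀, hi₀, hmin⟩ :=
    exists_min_image (range T) (weightAt w · n) (nonempty_range_iff.mpr hT.ne')
  set q := weightAt w i₀ n
  have hval (i : ℕ) : weightAt w i n = q ∨ weightAt w i n = q + 1 := by
    have hlow : q ≤ weightAt w i n :=
      (hw.weightAt n).map_mod_nat i ▸ hmin _ (mem_range.mpr (Nat.mod_lt i hT))
    have := hbal.weightAt_le i i₀ n
    omega
  refine ⟨q, hval, ?_⟩
  set H := {i ∈ range T | weightAt w i n = q + 1}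
  have hsum : T * q + #H = n * weightAt w 0 T := by
    have hsplit (i : ℕ) : weightAt w i n = q + if weightAt w i n = q + 1 then 1 else 0 := by
      rcases hval i with h | h <;> simp [h]
    rw [← hw.sum_weightAt, sum_congr rfl fun i _ => hsplit i, sum_add_distrib, sum_const,
      card_range, smul_eq_mul, ← card_filter]
  have hH : #H < T := by
    refine (card_lt_card ⟨filter_subset _ _, fun hsub => ?_⟩).trans_eq (card_range T)
    exact Nat.succ_ne_self q (mem_filter.mp (hsub hi₀)).2.symm
  rw [← hsum, Nat.mul_add_mod, Nat.mod_eq_of_lt hH]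

/-- If `d = gcd(p, T) > 1`, all windows of length `T / d` have the same weight, so `T / d`
would be a smaller period. -/
lemma CBalanced.coprime_weightAt (hbal : CBalanced w 1) (hw : Periodic w T) (hT : 0 < T)
    (hmin : ∀ t, 0 < t → Periodic w t → T ≤ t) : Nat.Coprime (weightAt w 0 T) T := by
  set d := Nat.gcd (weightAt w 0 T) T
  by_contra hcop
  have hd : 1 < d := lt_of_le_of_ne (Nat.gcd_pos_of_pos_right _ hT) (Ne.symm hcop)
  have hdT : d ∣ T := Nat.gcd_dvd_right _ _
  obtain ⟨q, hval, hcard⟩ := hbal.card_heavy_windows hw hT (T / d)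
  have hdiv : T / d * weightAt w 0 T % T = 0 := by
    obtain ⟨p', hp'⟩ := Nat.gcd_dvd_left (weightAt w 0 T) T
    rw [hp', ← mul_assoc, Nat.div_mul_cancel hdT, Nat.mul_mod_right]
  rw [hdiv, card_eq_zero, filter_eq_empty_iff] at hcard
  have hlight (i : ℕ) : weightAt w i (T / d) = q := by
    have := hcard (mem_range.mpr (Nat.mod_lt i hT))
    rw [(hw.weightAt _).map_mod_nat] at this
    exact (hval i).resolve_right this
  have := hmin (T / d) (Nat.div_pos (Nat.le_of_dvd hT hdT) (by omega))
    (periodic_of_weightAt_eq fun i => (hlight i).trans (hlight 0).symm)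
  exact absurd this (not_le.mpr (Nat.div_lt_self hT hd))

lemma CBalanced.exists_window_unique_weight (hbal : CBalanced w 1) (hw : Periodic w T)
    (hT : 0 < T) (hmin : ∀ t, 0 < t → Periodic w t → T ≤ t) :
    ∃ n, 0 < n ∧ ∃ i₀ < T, ∀ i, weightAt w i n = weightAt w i₀ n ↔ i % T = i₀ := by
  obtain rfl | hT₁ := (Nat.one_le_iff_ne_zero.mpr hT.ne').eq_or_lt
  · refine ⟨1, one_pos, 0, one_pos, fun i => ?_⟩
    simpa [Nat.mod_one] using ((hw.weightAt 1).map_mod_nat i).symm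
  obtain ⟨n, -, hn⟩ :=
    Nat.exists_mul_mod_eq_one_of_coprime (hbal.coprime_weightAt hw hT hmin) hT₁
  obtain ⟨q, hval, hcard⟩ := hbal.card_heavy_windows hw hT n
  rw [mul_comm, hn, card_eq_one] at hcard
  obtain ⟨i₀, hH⟩ := hcard
  have hheavy (i : ℕ) : weightAt w i n = q + 1 ↔ i % T = i₀ := by
    rw [show i % T = i₀ ↔ i % T ∈ ({i₀} : Finset ℕ) from mem_singleton.symm, ← hH,
      mem_filter, (hw.weightAt n).map_mod_nat]
    simp [Nat.mod_lt i hT]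
  have hi₀ : i₀ % T = i₀ := by
    have : i₀ ∈ range T := (mem_filter.mp (hH ▸ mem_singleton_self i₀)).1
    exact Nat.mod_eq_of_lt (mem_range.mp this)
  refine ⟨n, Nat.pos_of_ne_zero fun h => by simp [h] at hn, i₀, hi₀ ▸ Nat.mod_lt i₀ hT,
    fun i => ?_⟩
  rw [(hheavy i₀).mpr hi₀, hheavy]

end PeriodicCase

lemma semiAbReturns_eq_singleton {α : Type*} [DecidableEq α] {w : ℕ → α} {u : List α}
    {T i₀ : ℕ} (hw : Periodic w T) (hi₀ : i₀ < T) (hocc : abOcc w u = {i | i % T = i₀}) :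
    semiAbReturns w u = {wordAt w i₀ T} := by
  have hgap {i j : ℕ} (hi : i % T = i₀) (hj : j % T = i₀) (hij : i < j) : i + T ≤ j := by
    have := Nat.le_of_dvd (by omega) ((Nat.modEq_iff_dvd' hij.le).mp (hi.trans hj.symm))
    omega
  have hnext {i : ℕ} (hi : i % T = i₀) : (i + T) % T = i₀ := by rwa [Nat.add_mod_right]
  ext r
  simp only [semiAbReturns, hocc, Set.mem_ofPred_eq, Set.mem_singleton_iff]
  constructor
  · rintro ⟨i, j, hi, hj, hij, hfirst, rfl⟩
    obtain rfl : j = i + T := by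
      by_contra hne
      exact hfirst (i + T) (by omega) (by have := hgap hi hj hij; omega) (hnext hi)
    rw [Nat.add_sub_cancel_left, ← (hw.wordAt T).map_mod_nat, hi]
  · rintro rfl
    exact ⟨i₀, i₀ + T, Nat.mod_eq_of_lt hi₀, hnext (Nat.mod_eq_of_lt hi₀), by omega,
      fun k hk₁ hk₂ hk => by have := hgap (Nat.mod_eq_of_lt hi₀) hk hk₁; omega, by simp⟩

lemma CBalanced.exists_exactlyKSemiAbReturns_one {w : ℕ → Bool} (hbal : CBalanced w 1)
    (hper : PeriodicW w) : ∃ u, IsFactorW w u ∧ u ≠ [] ∧ ExactlyKSemiAbReturns w u 1 := by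
  classical
  obtain ⟨hT, hw⟩ := Nat.find_spec hper
  have hmin (t : ℕ) (ht : 0 < t) (hwt : Periodic w t) : Nat.find hper ≤ t :=
    Nat.find_min' hper ⟨ht, hwt⟩
  obtain ⟨n, hn, i₀, hi₀, hunique⟩ := hbal.exists_window_unique_weight hw hT hmin
  have hocc : abOcc w (wordAt w i₀ n) = {i | i % Nat.find hper = i₀} := by
    ext i
    simp only [abOcc, Set.mem_ofPred_eq, length_wordAt, abEquiv_wordAt_iff, hunique]
  refine ⟨wordAt w i₀ n, isFactorW_wordAt w i₀ n, by simpa [← List.length_pos_iff] using hn,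
    fun _ => wordAt w i₀ (Nat.find hper), injective_of_subsingleton _, ?_⟩
  rw [semiAbReturns_eq_singleton hw hi₀ hocc, Set.range_const]

/-- A recurrent balanced binary word is Sturmian or periodic, and if periodic it has a
factor with exactly one semi-abelian return. -/
theorem stmt14 (w : ℕ → Bool) (hrec : RecurrentW w) (hbal : CBalanced w 1) :
    (SturmianW w ∨ PeriodicW w) ∧
      (PeriodicW w → ∃ u, IsFactorW w u ∧ u ≠ [] ∧ ExactlyKSemiAbReturns w u 1) := by
  by_cases hup : UltPeriodicW w
  · exact ⟨Or.inr (hrec.periodicW hup), hbal.exists_exactlyKSemiAbReturns_one⟩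
  · exact ⟨Or.inl ⟨hup, complexityW_eq_of_not_ultPeriodicW hbal hup⟩,
      fun hper => absurd hper.ultPeriodicW hup⟩
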